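/- arXiv:2403.14907 — 7 statements merged into one kernel-verified Lean document; each statement's English description precedes it below -/
import Mathlib

section
/- Fix a, μ, L > 0, let χ_k* = ((μL² + k²π²)/(k²π²L²))·((k²π² + aL²)/μ) for each integer k ≥ 1, and let χ* = inf_{k ≥ 1} χ_k*. Then (1 + √(a/μ))² ≤ χ* ≤ (1 + √(a/μ))² + π²/(μL²) + aL²/π². -/
/-!
Writing `t = k²π²/L²`, one has `χ_k* = 1 + a/μ + (a/t + t/μ)`. By AM-GM the bracket is at
least `2√(a/μ)`, which gives the lower bound for every `k`; the upper bound is `χ_1*`.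
-/

open Real Set

/-- The critical chemotaxis value `χ_k*`. -/
noncomputable def chiStar (a μ L : ℝ) (k : ℕ) : ℝ :=
  ((μ * L^2 + (k : ℝ)^2 * π^2) / ((k : ℝ)^2 * π^2 * L^2)) * (((k : ℝ)^2 * π^2 + a * L^2) / μ)

lemma two_mul_sqrt_div_le_div_add_div {a μ t : ℝ} (ha : 0 ≤ a) (hμ : 0 ≤ μ) (ht : 0 < t) :
    2 * √(a / μ) ≤ a / t + t / μ := by
  have hprod : a / μ = (a / t) * (t / μ) := by field_simp
  have hx : √(a / t) ^ 2 = a / t := sq_sqrt (by positivity)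
  have hy : √(t / μ) ^ 2 = t / μ := sq_sqrt (by positivity)
  calc 2 * √(a / μ) = 2 * √(a / t) * √(t / μ) := by
        rw [hprod, sqrt_mul (by positivity), mul_assoc]
    _ ≤ √(a / t) ^ 2 + √(t / μ) ^ 2 := two_mul_le_add_sq _ _
    _ = a / t + t / μ := by rw [hx, hy]

lemma chiStar_eq {a μ L : ℝ} {k : ℕ} (hμ : μ ≠ 0) (hL : L ≠ 0) (hk : k ≠ 0) :
    chiStar a μ L k =
      1 + a / μ + (a / ((k : ℝ)^2 * π^2 / L^2) + (k : ℝ)^2 * π^2 / L^2 / μ) := by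
  have hk' : (k : ℝ) ≠ 0 := Nat.cast_ne_zero.mpr hk
  have hπ : π ≠ 0 := pi_ne_zero
  unfold chiStar
  field_simp
  ring

lemma chiStar_one {a μ L : ℝ} (hμ : μ ≠ 0) (hL : L ≠ 0) :
    chiStar a μ L 1 = 1 + a / μ + π^2 / (μ * L^2) + a * L^2 / π^2 := by
  have hπ : π ≠ 0 := pi_ne_zero
  rw [chiStar_eq hμ hL one_ne_zero]
  field_simp
  ring

lemma sq_one_add_sqrt_div_le_chiStar {a μ L : ℝ} (ha : 0 ≤ a) (hμ : 0 < μ) (hL : L ≠ 0)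
    {k : ℕ} (hk : k ≠ 0) : (1 + √(a / μ))^2 ≤ chiStar a μ L k := by
  have ht : 0 < (k : ℝ)^2 * π^2 / L^2 := by
    have : (k : ℝ) ≠ 0 := Nat.cast_ne_zero.mpr hk
    positivity
  have hsq : √(a / μ) ^ 2 = a / μ := sq_sqrt (by positivity)
  rw [chiStar_eq hμ.ne' hL hk]
  nlinarith [two_mul_sqrt_div_le_div_add_div ha hμ.le ht]

theorem stmt_3 (a μ L : ℝ) (ha : 0 < a) (hμ : 0 < μ) (hL : 0 < L) :
    (1 + Real.sqrt (a / μ))^2 ≤ sInf {x : ℝ | ∃ k : ℕ, 1 ≤ k ∧ x = chiStar a μ L k} ∧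
    sInf {x : ℝ | ∃ k : ℕ, 1 ≤ k ∧ x = chiStar a μ L k}
      ≤ (1 + Real.sqrt (a / μ))^2 + π^2 / (μ * L^2) + a * L^2 / π^2 := by
  set S := {x : ℝ | ∃ k : ℕ, 1 ≤ k ∧ x = chiStar a μ L k}
  have hlower : ∀ x ∈ S, (1 + √(a / μ))^2 ≤ x := by
    rintro x ⟨k, hk, rfl⟩
    exact sq_one_add_sqrt_div_le_chiStar ha.le hμ hL.ne' (Nat.one_le_iff_ne_zero.mp hk)
  have hone : chiStar a μ L 1 ∈ S := ⟨1, le_rfl, rfl⟩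
  refine ⟨le_csInf ⟨_, hone⟩ hlower, ?_⟩
  have hsqrt : 1 + a / μ ≤ (1 + √(a / μ))^2 := by
    nlinarith [sq_sqrt (div_nonneg ha.le hμ.le), sqrt_nonneg (a / μ)]
  calc sInf S ≤ chiStar a μ L 1 := csInf_le ⟨_, hlower⟩ hone
    _ = 1 + a / μ + π^2 / (μ * L^2) + a * L^2 / π^2 := chiStar_one hμ.ne' hL.ne'
    _ ≤ (1 + √(a / μ))^2 + π^2 / (μ * L^2) + a * L^2 / π^2 := by linarith
end

section
/- Let (u, v) be a non-constant positive stationary solution of the chemotaxis system. Then |v'(x)| ≤ √μ · v(x) for all x ∈ [0, L]. -/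
open Real Set MeasureTheory Filter

/-- `(u, v)` is a positive stationary solution of the parabolic-elliptic chemotaxis system
with singular sensitivity and logistic source on `[0, L]`, with Neumann boundary
conditions. -/
def IsStatSol (χ a b μ ν L : ℝ) (u v : ℝ → ℝ) : Prop :=
  ContDiff ℝ 2 u ∧ ContDiff ℝ 2 v ∧
  (∀ x ∈ Icc (0 : ℝ) L, 0 < u x) ∧ (∀ x ∈ Icc (0 : ℝ) L, 0 < v x) ∧
  (∀ x ∈ Ioo (0 : ℝ) L,
    deriv (deriv u) x - χ * deriv (fun y => u y * deriv v y / v y) x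
      + u x * (a - b * u x) = 0) ∧
  (∀ x ∈ Ioo (0 : ℝ) L, deriv (deriv v) x - μ * v x + ν * u x = 0) ∧
  deriv u 0 = 0 ∧ deriv u L = 0 ∧ deriv v 0 = 0 ∧ deriv v L = 0

/-- `u` is non-constant on `[0, L]`. -/
def NonConst (L : ℝ) (u : ℝ → ℝ) : Prop :=
  ¬ ∃ c : ℝ, ∀ x ∈ Icc (0 : ℝ) L, u x = c

/-! The derivative of `e^{cx} (v' - c v)` is `e^{cx} (v'' - c² v)`, so `v'' ≤ c² v` makes
`e^{cx} (v' - c v)` and `e^{-cx} (v' + c v)` nonincreasing. Under Neumann conditions the first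
is at most its value `-c v(0) ≤ 0` at `0` and the second at least its value `c e^{-cL} v(L) ≥ 0`
at `L`, which together give `|v'| ≤ c v`. For a stationary solution `v'' = μ v - ν u < μ v`, so
this applies with `c = √μ`. -/

theorem hasDerivAt_exp_mul_deriv_sub {v : ℝ → ℝ} (hv : Differentiable ℝ v)
    (hv' : Differentiable ℝ (deriv v)) (c x : ℝ) :
    HasDerivAt (fun y => exp (c * y) * (deriv v y - c * v y))
      (exp (c * x) * (deriv (deriv v) x - c ^ 2 * v x)) x := by
  have hexp : HasDerivAt (fun y => exp (c * y)) (exp (c * x) * c) x := by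
    simpa using ((hasDerivAt_id x).const_mul c).exp
  exact (hexp.mul ((hv' x).hasDerivAt.sub ((hv x).hasDerivAt.const_mul c))).congr_deriv
    (by rw [Pi.sub_apply]; ring)

theorem antitoneOn_exp_mul_deriv_sub {v : ℝ → ℝ} (hv : Differentiable ℝ v)
    (hv' : Differentiable ℝ (deriv v)) {c a b : ℝ}
    (hvv : ∀ x ∈ Ioo a b, deriv (deriv v) x ≤ c ^ 2 * v x) :
    AntitoneOn (fun y => exp (c * y) * (deriv v y - c * v y)) (Icc a b) := by
  have hF := hasDerivAt_exp_mul_deriv_sub hv hv' c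
  refine antitoneOn_of_deriv_nonpos (convex_Icc a b)
    (fun x _ => (hF x).continuousAt.continuousWithinAt)
    (fun x _ => (hF x).differentiableAt.differentiableWithinAt) fun x hx => ?_
  rw [interior_Icc] at hx
  rw [(hF x).deriv]
  exact mul_nonpos_of_nonneg_of_nonpos (exp_pos _).le (sub_nonpos.2 (hvv x hx))

theorem abs_deriv_le_of_deriv_deriv_le {v : ℝ → ℝ} (hv : Differentiable ℝ v)
    (hv' : Differentiable ℝ (deriv v)) {c a b : ℝ} (hc : 0 ≤ c)
    (hvv : ∀ x ∈ Ioo a b, deriv (deriv v) x ≤ c ^ 2 * v x)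
    (ha : deriv v a = 0) (hb : deriv v b = 0) (hva : 0 ≤ v a) (hvb : 0 ≤ v b) :
    ∀ x ∈ Icc a b, |deriv v x| ≤ c * v x := by
  intro x hx
  have hab : a ≤ b := hx.1.trans hx.2
  have hupper : exp (c * x) * (deriv v x - c * v x) ≤ 0 := calc
    _ ≤ exp (c * a) * (deriv v a - c * v a) :=
      antitoneOn_exp_mul_deriv_sub hv hv' hvv (left_mem_Icc.2 hab) hx hx.1
    _ ≤ 0 := by rw [ha, zero_sub, mul_neg]; exact neg_nonpos.2 (by positivity)
  have hlower : 0 ≤ exp (-c * x) * (deriv v x - -c * v x) := calc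
    (0 : ℝ) ≤ exp (-c * b) * (deriv v b - -c * v b) := by
      simp only [hb, zero_sub, neg_mul, neg_neg]; positivity
    _ ≤ exp (-c * x) * (deriv v x - -c * v x) :=
      antitoneOn_exp_mul_deriv_sub hv hv' (c := -c) (by simpa using hvv) hx
        (right_mem_Icc.2 hab) hx.2
  have h1 := nonpos_of_mul_nonpos_right hupper (exp_pos _)
  have h2 := nonneg_of_mul_nonneg_right hlower (exp_pos _)
  rw [abs_le]
  constructor <;> linarith

theorem stmt_5_general (χ a b μ ν L : ℝ)
    (hμ : 0 < μ) (hν : 0 < ν)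
    (u v : ℝ → ℝ) (hsol : IsStatSol χ a b μ ν L u v) :
    ∀ x ∈ Icc (0 : ℝ) L, |deriv v x| ≤ Real.sqrt μ * v x := by
  obtain ⟨-, hv, hupos, hvpos, -, hveq, -, -, hv0, hvL⟩ := hsol
  have hvv : ∀ x ∈ Ioo 0 L, deriv (deriv v) x ≤ Real.sqrt μ ^ 2 * v x := by
    intro x hx
    have := mul_pos hν (hupos x (Ioo_subset_Icc_self hx))
    rw [sq_sqrt hμ.le]
    linarith [hveq x hx]
  intro x hx
  have hL : 0 ≤ L := hx.1.trans hx.2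
  exact abs_deriv_le_of_deriv_deriv_le (hv.differentiable two_ne_zero) hv.differentiable_deriv_two
    (sqrt_nonneg μ) hvv hv0 hvL (hvpos 0 (left_mem_Icc.2 hL)).le (hvpos L (right_mem_Icc.2 hL)).le
    x hx

theorem stmt_5 (χ a b μ ν L : ℝ) (hχ : 0 < χ) (ha : 0 < a) (hb : 0 < b)
    (hμ : 0 < μ) (hν : 0 < ν) (hL : 0 < L)
    (u v : ℝ → ℝ) (hsol : IsStatSol χ a b μ ν L u v) (hnc : NonConst L u) :
    ∀ x ∈ Icc (0 : ℝ) L, |deriv v x| ≤ Real.sqrt μ * v x :=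
  stmt_5_general χ a b μ ν L hμ hν u v hsol
end

section
/- There exists a constant δ* > 0, depending only on μ, ν and L (and in particular independent of χ and of the particular solution), such that every non-constant positive stationary solution (u, v) of the chemotaxis system satisfies v(x) ≥ δ* · ∫₀^L u(y) dy for all x ∈ [0, L]. -/
/-! The Neumann problem `v'' = μ v - ν u` with `u > 0` forces `w = v'/v` to satisfy the
Riccati inequality `w' < μ - w²` with `w = 0` at both ends, so `|w| ≤ √μ` on `[0, L]`: a
Harnack inequality `v y ≤ exp (√μ L) v x`. Integrating the equation gives
`μ ∫ v = ν ∫ u`, hence `ν ∫ u ≤ μ L exp (√μ L) v x`, with a constant free of `χ, a, b`. -/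

open Real Set MeasureTheory Filter

lemma hasDerivAt_logDeriv {𝕜 : Type*} [NontriviallyNormedField 𝕜] {v : 𝕜 → 𝕜} {t : 𝕜}
    (hv : DifferentiableAt 𝕜 v t) (hv' : DifferentiableAt 𝕜 (deriv v) t) (ht : v t ≠ 0) :
    HasDerivAt (logDeriv v) (deriv (deriv v) t / v t - logDeriv v t ^ 2) t := by
  refine (hv'.hasDerivAt.div hv.hasDerivAt ht).congr_deriv ?_
  rw [logDeriv_apply]
  field_simp

lemma le_of_hasDerivAt_lt_sq_sub_sq {w w' : ℝ → ℝ} {p q c : ℝ}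
    (hw : ∀ t ∈ Icc p q, HasDerivAt w (w' t) t) (hp : w p < c)
    (hric : ∀ t ∈ Ioo p q, w' t < c ^ 2 - w t ^ 2) :
    ∀ t ∈ Icc p q, w t ≤ c := by
  have hcont : ContinuousOn w (Icc p q) := fun t ht => (hw t ht).continuousAt.continuousWithinAt
  refine image_le_of_deriv_right_lt_deriv_boundary' hcont
    (fun t ht => (hw t (Ico_subset_Icc_self ht)).hasDerivWithinAt) hp.le continuousOn_const
    (fun _ _ => hasDerivWithinAt_const _ _ c) fun t ht hwt => ?_
  have htp : p < t := lt_of_le_of_ne ht.1 (by rintro rfl; exact hp.ne hwt)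
  simpa [hwt] using hric t ⟨htp, ht.2⟩

lemma abs_le_of_hasDerivAt_lt_sq_sub_sq {w w' : ℝ → ℝ} {p q c : ℝ}
    (hw : ∀ t ∈ Icc p q, HasDerivAt w (w' t) t) (hp : w p < c) (hq : -c < w q)
    (hric : ∀ t ∈ Ioo p q, w' t < c ^ 2 - w t ^ 2) :
    ∀ t ∈ Icc p q, |w t| ≤ c := by
  -- `t ↦ -w (-t)` satisfies the same Riccati inequality.
  have hrefl : ∀ t ∈ Icc (-q) (-p), (fun s => -w (-s)) t ≤ c := by
    refine le_of_hasDerivAt_lt_sq_sub_sq (w' := fun s => w' (-s)) (fun t ht => ?_)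
      (by simpa using neg_lt.mp hq) (fun t ht => ?_)
    · have := ((hw (-t) ⟨le_neg.mp ht.2, neg_le.mp ht.1⟩).comp t (hasDerivAt_neg t)).fun_neg
      simpa [Function.comp_def] using this
    · simpa using hric (-t) ⟨lt_neg.mp ht.2, neg_lt.mp ht.1⟩
  intro t ht
  refine abs_le.mpr ⟨?_, le_of_hasDerivAt_lt_sq_sub_sq hw hp hric t ht⟩
  simpa [neg_le] using hrefl (-t) ⟨neg_le_neg ht.2, neg_le_neg ht.1⟩

lemma abs_logDeriv_le_sqrt {μ ν p q : ℝ} {u v : ℝ → ℝ} (hμ : 0 < μ) (hν : 0 < ν)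
    (hv : ContDiff ℝ 2 v) (hupos : ∀ t ∈ Ioo p q, 0 < u t) (hvpos : ∀ t ∈ Icc p q, 0 < v t)
    (hode : ∀ t ∈ Ioo p q, deriv (deriv v) t - μ * v t + ν * u t = 0)
    (hvp : deriv v p = 0) (hvq : deriv v q = 0) :
    ∀ t ∈ Icc p q, |logDeriv v t| ≤ √μ := by
  refine abs_le_of_hasDerivAt_lt_sq_sub_sq (fun t ht => hasDerivAt_logDeriv
      (hv.differentiable two_ne_zero t) (hv.differentiable_deriv_two t) (hvpos t ht).ne')
    (by simpa [logDeriv_apply, hvp] using hμ) (by simpa [logDeriv_apply, hvq] using hμ)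
    fun t ht => ?_
  have hvt := hvpos t (Ioo_subset_Icc_self ht)
  have : deriv (deriv v) t / v t < μ :=
    (div_lt_iff₀ hvt).mpr (by nlinarith [hode t ht, mul_pos hν (hupos t ht)])
  rw [sq_sqrt hμ.le]
  linarith

lemma le_exp_mul_of_abs_logDeriv_le {v : ℝ → ℝ} {p q c : ℝ} (hv : Differentiable ℝ v)
    (hvpos : ∀ t ∈ Icc p q, 0 < v t) (hw : ∀ t ∈ Icc p q, |logDeriv v t| ≤ c) :
    ∀ x ∈ Icc p q, ∀ y ∈ Icc p q, v y ≤ exp (c * (q - p)) * v x := by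
  intro x hx y hy
  have hlip : |log (v y) - log (v x)| ≤ c * |y - x| :=
    (convex_Icc p q).norm_image_sub_le_of_norm_hasDerivWithin_le
      (fun t ht => ((hv t).hasDerivAt.log (hvpos t ht).ne').hasDerivWithinAt) hw hx hy
  have hdist : |y - x| ≤ q - p :=
    abs_sub_le_iff.mpr ⟨by linarith [hx.1, hy.2], by linarith [hx.2, hy.1]⟩
  have hc : 0 ≤ c := (abs_nonneg _).trans (hw x hx)
  calc v y = exp (log (v y)) := (exp_log (hvpos y hy)).symm
    _ ≤ exp (c * (q - p) + log (v x)) := by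
        gcongr
        linarith [le_abs_self (log (v y) - log (v x)), mul_le_mul_of_nonneg_left hdist hc]
    _ = exp (c * (q - p)) * v x := by rw [exp_add, exp_log (hvpos x hx)]

lemma mul_integral_eq_mul_integral_of_neumann {μ ν L : ℝ} {u v : ℝ → ℝ} (hL : 0 ≤ L)
    (hu : Continuous u) (hv : ContDiff ℝ 2 v)
    (hode : ∀ x ∈ Ioo 0 L, deriv (deriv v) x - μ * v x + ν * u x = 0)
    (hv0 : deriv v 0 = 0) (hvL : deriv v L = 0) :
    μ * ∫ y in (0 : ℝ)..L, v y = ν * ∫ y in (0 : ℝ)..L, u y := by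
  have hvc : Continuous v := hv.continuous
  have hμv : IntervalIntegrable (fun y => μ * v y) volume 0 L := by
    apply Continuous.intervalIntegrable; fun_prop
  have hνu : IntervalIntegrable (fun y => ν * u y) volume 0 L := by
    apply Continuous.intervalIntegrable; fun_prop
  have hflux : ∫ y in (0 : ℝ)..L, (μ * v y - ν * u y) = deriv v L - deriv v 0 :=
    intervalIntegral.integral_eq_sub_of_hasDerivAt_of_le hL
      (hv.continuous_deriv (by norm_num)).continuousOn
      (fun x hx => by
        simpa [show deriv (deriv v) x = μ * v x - ν * u x by linarith [hode x hx]]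
          using (hv.differentiable_deriv_two x).hasDerivAt)
      (hμv.sub hνu)
  rw [intervalIntegral.integral_sub hμv hνu, intervalIntegral.integral_const_mul,
    intervalIntegral.integral_const_mul, hv0, hvL] at hflux
  linarith

theorem stmt_6 (μ ν L : ℝ) (hμ : 0 < μ) (hν : 0 < ν) (hL : 0 < L) :
    ∃ δ : ℝ, 0 < δ ∧
      ∀ χ a b : ℝ, 0 < χ → 0 < a → 0 < b →
        ∀ u v : ℝ → ℝ, IsStatSol χ a b μ ν L u v → NonConst L u →
          ∀ x ∈ Icc (0 : ℝ) L, δ * (∫ y in (0 : ℝ)..L, u y) ≤ v x := by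
  refine ⟨ν / (μ * L) * exp (-(√μ * L)), by positivity, ?_⟩
  intro χ a b _ _ _ u v hsol _ x hx
  obtain ⟨hu, hv, hupos, hvpos, -, hode, -, -, hv0, hvL⟩ := hsol
  have hharnack : ∀ y ∈ Icc 0 L, v y ≤ exp (√μ * L) * v x := by
    simpa using le_exp_mul_of_abs_logDeriv_le (hv.differentiable two_ne_zero) hvpos
      (abs_logDeriv_le_sqrt hμ hν hv (fun t ht => hupos t (Ioo_subset_Icc_self ht)) hvpos
        hode hv0 hvL) x hx
  have hmass := mul_integral_eq_mul_integral_of_neumann hL.le hu.continuous hv hode hv0 hvL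
  have hbound : ∫ y in (0 : ℝ)..L, v y ≤ exp (√μ * L) * (L * v x) := by
    simpa using intervalIntegral.integral_mono_on hL.le
      (hv.continuous.intervalIntegrable (μ := volume) 0 L)
      (continuous_const.intervalIntegrable 0 L) hharnack
  calc ν / (μ * L) * exp (-(√μ * L)) * ∫ y in (0 : ℝ)..L, u y
      = exp (-(√μ * L)) / (μ * L) * (ν * ∫ y in (0 : ℝ)..L, u y) := by ring
    _ = exp (-(√μ * L)) / L * ∫ y in (0 : ℝ)..L, v y := by
        rw [← hmass]
        field_simp
    _ ≤ exp (-(√μ * L)) / L * (exp (√μ * L) * (L * v x)) := by gcongr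
    _ = v x := by
        field_simp
        rw [← exp_add]
        simp
end

section
/- Let (u, v) be a non-constant positive stationary solution of the chemotaxis system. Then inf_{x ∈ [0,L]} u(x) < a/b < sup_{x ∈ [0,L]} u(x), and moreover ∫₀^L u(x) dx < aL/b and ∫₀^L u(x)² dx < a²L/b², and b·∫₀^L u(x)² dx = a·∫₀^L u(x) dx. -/
open Real Set MeasureTheory Filter

/-! Integrating the `u`-equation over `[0, L]`, the diffusion and chemotaxis terms are
derivatives of `u'` and `u v' / v`, which vanish at both ends by the Neumann conditions; hence
`∫ u (a - b u) = 0`, i.e. `b ∫ u² = a ∫ u`. With `c = a / b` this gives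
`∫ (u - c)² = c (c L - ∫ u)`, which is positive because `u` is not constant, so `∫ u < c L`
and `∫ u² = c ∫ u < c² L`. Finally `u (c - u)` is continuous with zero integral and does not
vanish identically, so it changes sign; since `u > 0`, `u` takes values on both sides of `c`. -/

section FundamentalTheorem

variable {E : Type*} [NormedAddCommGroup E] [NormedSpace ℝ E]
  {f : ℝ → E} {s : Set ℝ} {a b : ℝ}

theorem ContDiffOn.intervalIntegrable_deriv (hf : ContDiffOn ℝ 1 f s) (hs : IsOpen s)
    (hab : uIcc a b ⊆ s) : IntervalIntegrable (deriv f) volume a b :=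
  ((hf.continuousOn_deriv_of_isOpen hs le_rfl).mono hab).intervalIntegrable

theorem ContDiffOn.integral_deriv_eq_sub [CompleteSpace E] (hf : ContDiffOn ℝ 1 f s)
    (hs : IsOpen s) (hab : uIcc a b ⊆ s) : ∫ x in a..b, deriv f x = f b - f a :=
  intervalIntegral.integral_deriv_eq_sub
    (fun _ hx ↦ (hf.differentiableOn one_ne_zero).differentiableAt (hs.mem_nhds (hab hx)))
    (hf.intervalIntegrable_deriv hs hab)

end FundamentalTheorem

section SignOfIntegral

variable {f : ℝ → ℝ} {a b x₀ : ℝ}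

theorem intervalIntegral.integral_pos_of_continuousOn_of_nonneg (hab : a < b)
    (hf : ContinuousOn f (Icc a b)) (hnonneg : ∀ x ∈ Icc a b, 0 ≤ f x)
    (hx₀ : x₀ ∈ Icc a b) (hpos : 0 < f x₀) : 0 < ∫ x in a..b, f x := by
  simpa using intervalIntegral.integral_lt_integral_of_continuousOn_of_le_of_exists_lt hab
    continuousOn_const hf (fun x hx ↦ hnonneg x (Ioc_subset_Icc_self hx)) ⟨x₀, hx₀, hpos⟩

theorem exists_neg_of_integral_nonpos (hab : a < b) (hf : ContinuousOn f (Icc a b))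
    (hint : ∫ x in a..b, f x ≤ 0) (hx₀ : x₀ ∈ Icc a b) (hne : f x₀ ≠ 0) :
    ∃ x ∈ Icc a b, f x < 0 := by
  by_contra! hnonneg
  exact hint.not_gt <| intervalIntegral.integral_pos_of_continuousOn_of_nonneg hab hf hnonneg
    hx₀ ((hnonneg x₀ hx₀).lt_of_ne' hne)

theorem exists_pos_of_integral_nonneg (hab : a < b) (hf : ContinuousOn f (Icc a b))
    (hint : 0 ≤ ∫ x in a..b, f x) (hx₀ : x₀ ∈ Icc a b) (hne : f x₀ ≠ 0) :
    ∃ x ∈ Icc a b, 0 < f x := by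
  simpa using exists_neg_of_integral_nonpos hab hf.neg
    (by simpa [intervalIntegral.integral_neg] using hint) hx₀ (neg_ne_zero.mpr hne)

end SignOfIntegral

section LogisticBalance

variable {f : ℝ → ℝ} {a b c x₀ : ℝ}

theorem integral_sq_eq_mul_integral_of_integral_mul_sub_eq_zero (hab : a ≤ b)
    (hf : ContinuousOn f (Icc a b)) (h0 : ∫ x in a..b, f x * (c - f x) = 0) :
    ∫ x in a..b, f x ^ 2 = c * ∫ x in a..b, f x := by
  have hfi := hf.intervalIntegrable_of_Icc (μ := volume) hab
  have hsq : IntervalIntegrable (fun x ↦ f x ^ 2) volume a b :=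
    (hf.pow 2).intervalIntegrable_of_Icc hab
  have hlin :
      ∫ x in a..b, f x * (c - f x) = c * (∫ x in a..b, f x) - ∫ x in a..b, f x ^ 2 := by
    rw [← intervalIntegral.integral_const_mul,
      ← intervalIntegral.integral_sub (hfi.const_mul c) hsq]
    exact intervalIntegral.integral_congr fun x _ ↦ by ring
  linarith

theorem integral_lt_of_integral_mul_sub_eq_zero (hab : a < b) (hc : 0 < c)
    (hf : ContinuousOn f (Icc a b)) (h0 : ∫ x in a..b, f x * (c - f x) = 0)
    (hx₀ : x₀ ∈ Icc a b) (hne : f x₀ ≠ c) :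
    ∫ x in a..b, f x < c * (b - a) := by
  have hfi := hf.intervalIntegrable_of_Icc (μ := volume) hab.le
  have hsq : IntervalIntegrable (fun x ↦ f x ^ 2) volume a b :=
    (hf.pow 2).intervalIntegrable_of_Icc hab.le
  have hvar : 0 < ∫ x in a..b, (f x - c) ^ 2 :=
    intervalIntegral.integral_pos_of_continuousOn_of_nonneg hab
      ((hf.sub continuousOn_const).pow 2) (fun x _ ↦ sq_nonneg _) hx₀
      (sq_pos_of_ne_zero (sub_ne_zero.mpr hne))
  have hexpand : ∫ x in a..b, (f x - c) ^ 2
      = (∫ x in a..b, f x ^ 2) - 2 * c * (∫ x in a..b, f x) + c ^ 2 * (b - a) := by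
    calc ∫ x in a..b, (f x - c) ^ 2 = ∫ x in a..b, (f x ^ 2 - 2 * c * f x) + c ^ 2 :=
          intervalIntegral.integral_congr fun x _ ↦ by ring
      _ = _ := by
        rw [intervalIntegral.integral_add (hsq.sub (hfi.const_mul _)) intervalIntegrable_const,
          intervalIntegral.integral_sub hsq (hfi.const_mul _), intervalIntegral.integral_const_mul,
          intervalIntegral.integral_const, smul_eq_mul, mul_comm (b - a)]
  rw [hexpand, integral_sq_eq_mul_integral_of_integral_mul_sub_eq_zero hab.le hf h0] at hvar
  nlinarith

theorem exists_lt_and_exists_gt_of_integral_mul_sub_eq_zero (hab : a < b)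
    (hf : ContinuousOn f (Icc a b)) (hpos : ∀ x ∈ Icc a b, 0 < f x)
    (h0 : ∫ x in a..b, f x * (c - f x) = 0) (hx₀ : x₀ ∈ Icc a b) (hne : f x₀ ≠ c) :
    (∃ x ∈ Icc a b, f x < c) ∧ ∃ x ∈ Icc a b, c < f x := by
  have hg : ContinuousOn (fun x ↦ f x * (c - f x)) (Icc a b) := hf.mul (continuousOn_const.sub hf)
  have hg₀ : f x₀ * (c - f x₀) ≠ 0 :=
    mul_ne_zero (hpos x₀ hx₀).ne' (sub_ne_zero.mpr hne.symm)
  obtain ⟨x₁, hx₁, hg₁⟩ := exists_pos_of_integral_nonneg hab hg h0.ge hx₀ hg₀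
  obtain ⟨x₂, hx₂, hg₂⟩ := exists_neg_of_integral_nonpos hab hg h0.le hx₀ hg₀
  exact ⟨⟨x₁, hx₁, sub_pos.mp (pos_of_mul_pos_right hg₁ (hpos x₁ hx₁).le)⟩,
    ⟨x₂, hx₂, sub_neg.mp (neg_of_mul_neg_right hg₂ (hpos x₂ hx₂).le)⟩⟩

end LogisticBalance

theorem IsStatSol.integral_mul_sub_eq_zero {χ a b μ ν L : ℝ} {u v : ℝ → ℝ}
    (hsol : IsStatSol χ a b μ ν L u v) (hL : 0 ≤ L) :
    ∫ x in (0 : ℝ)..L, u x * (a - b * u x) = 0 := by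
  obtain ⟨hu, hv, -, hvpos, hode, -, hu0, huL, hv0, hvL⟩ := hsol
  set w : ℝ → ℝ := fun y ↦ u y * deriv v y / v y
  have hIcc : uIcc 0 L ⊆ {x | v x ≠ 0} := fun x hx ↦ (hvpos x (uIcc_of_le hL ▸ hx)).ne'
  have hS : IsOpen {x | v x ≠ 0} := isOpen_ne_fun hv.continuous continuous_const
  have hdu : ContDiffOn ℝ 1 (deriv u) univ := (hu.deriv' (n := 1)).contDiffOn
  have hw : ContDiffOn ℝ 1 w {x | v x ≠ 0} :=
    ((hu.of_le one_le_two).contDiffOn.mul (hv.deriv' (n := 1)).contDiffOn).div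
      (hv.of_le one_le_two).contDiffOn fun _ hx ↦ hx
  have hflux : ∫ x in (0 : ℝ)..L, deriv w x = 0 := by
    rw [hw.integral_deriv_eq_sub hS hIcc]
    simp [w, hv0, hvL]
  have hdiffusion : ∫ x in (0 : ℝ)..L, deriv (deriv u) x = 0 := by
    rw [hdu.integral_deriv_eq_sub isOpen_univ (subset_univ _), hu0, huL, sub_zero]
  calc ∫ x in (0 : ℝ)..L, u x * (a - b * u x)
      = ∫ x in (0 : ℝ)..L, χ * deriv w x - deriv (deriv u) x :=
        intervalIntegral.integral_congr_Ioo_of_le hL fun x hx ↦ by linarith [hode x hx]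
    _ = 0 := by
      rw [intervalIntegral.integral_sub ((hw.intervalIntegrable_deriv hS hIcc).const_mul χ)
        (hdu.intervalIntegrable_deriv isOpen_univ (subset_univ _)),
        intervalIntegral.integral_const_mul, hflux, hdiffusion, mul_zero, sub_zero]

theorem stmt_7_general (χ a b μ ν L : ℝ) (ha : 0 < a) (hb : 0 < b) (hL : 0 < L)
    (u v : ℝ → ℝ) (hsol : IsStatSol χ a b μ ν L u v) (hnc : NonConst L u) :
    sInf (u '' Icc (0 : ℝ) L) < a / b ∧ a / b < sSup (u '' Icc (0 : ℝ) L) ∧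
    (∫ x in (0 : ℝ)..L, u x) < a * L / b ∧
    (∫ x in (0 : ℝ)..L, (u x)^2) < a^2 * L / b^2 ∧
    b * (∫ x in (0 : ℝ)..L, (u x)^2) = a * (∫ x in (0 : ℝ)..L, u x) := by
  have hu : ContinuousOn u (Icc 0 L) := hsol.1.continuous.continuousOn
  have hc : 0 < a / b := div_pos ha hb
  have hbalance : ∫ x in (0 : ℝ)..L, u x * (a / b - u x) = 0 := by
    have hscale : ∫ x in (0 : ℝ)..L, u x * (a - b * u x)
        = b * ∫ x in (0 : ℝ)..L, u x * (a / b - u x) := by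
      rw [← intervalIntegral.integral_const_mul]
      exact intervalIntegral.integral_congr fun x _ ↦ by field_simp
    exact (mul_eq_zero.mp (hscale ▸ hsol.integral_mul_sub_eq_zero hL.le)).resolve_left hb.ne'
  obtain ⟨x₀, hx₀, hne⟩ : ∃ x ∈ Icc (0 : ℝ) L, u x ≠ a / b := by
    by_contra! h
    exact hnc ⟨a / b, h⟩
  obtain ⟨⟨x₁, hx₁, hlt⟩, ⟨x₂, hx₂, hgt⟩⟩ :=
    exists_lt_and_exists_gt_of_integral_mul_sub_eq_zero hL hu hsol.2.2.1 hbalance hx₀ hne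
  have himage := isCompact_Icc.image_of_continuousOn hu
  have hmean := integral_lt_of_integral_mul_sub_eq_zero hL hc hu hbalance hx₀ hne
  have hsq := integral_sq_eq_mul_integral_of_integral_mul_sub_eq_zero hL.le hu hbalance
  refine ⟨csInf_lt_of_lt himage.bddBelow (mem_image_of_mem u hx₁) hlt,
    lt_csSup_of_lt himage.bddAbove (mem_image_of_mem u hx₂) hgt, ?_, ?_, ?_⟩
  · linarith [show a / b * (L - 0) = a * L / b by ring]
  · calc ∫ x in (0 : ℝ)..L, u x ^ 2 = a / b * ∫ x in (0 : ℝ)..L, u x := hsq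
      _ < a / b * (a / b * (L - 0)) := mul_lt_mul_of_pos_left hmean hc
      _ = a ^ 2 * L / b ^ 2 := by ring
  · rw [hsq, ← mul_assoc, mul_div_cancel₀ a hb.ne']

theorem stmt_7 (χ a b μ ν L : ℝ) (hχ : 0 < χ) (ha : 0 < a) (hb : 0 < b)
    (hμ : 0 < μ) (hν : 0 < ν) (hL : 0 < L)
    (u v : ℝ → ℝ) (hsol : IsStatSol χ a b μ ν L u v) (hnc : NonConst L u) :
    sInf (u '' Icc (0 : ℝ) L) < a / b ∧ a / b < sSup (u '' Icc (0 : ℝ) L) ∧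
    (∫ x in (0 : ℝ)..L, u x) < a * L / b ∧
    (∫ x in (0 : ℝ)..L, (u x)^2) < a^2 * L / b^2 ∧
    b * (∫ x in (0 : ℝ)..L, (u x)^2) = a * (∫ x in (0 : ℝ)..L, u x) :=
  stmt_7_general χ a b μ ν L ha hb hL u v hsol hnc
end

section
/- There exists a constant C₁ > 0, depending only on χ, a, b, μ and L (and independent of the particular solution), such that every non-constant positive stationary solution (u, v) of the chemotaxis system satisfies |u(x)| ≤ C₁ and |u'(x)| ≤ C₁ for all x ∈ [0, L]. -/
/-
With `q = v'/v`, the second equation gives `q' = μ - νu/v - q² ≤ μ`; as `q` vanishes at both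
ends, `|q| ≤ μL`, so `log v` oscillates by at most `μL²` on `[0, L]`.

The flux `s = u' - χ u v'/v` satisfies `s' = u (b u - a)`, `s(0) = s(L) = 0`, and
`(u v^(-χ))' = v^(-χ) s`. At a maximum point `x₀` of `u v^(-χ)` one has `s(x₀) = 0`; if
`u(x₀) > a/b`, then `s' > 0` near `x₀`, so `s` has the sign that makes `u v^(-χ)` grow away from
`x₀` on one side, a contradiction. Hence `u(x₀) ≤ a/b`, and
`u(x) ≤ u(x₀) (v(x)/v(x₀))^χ ≤ (a/b) e^(χμL²)`. Integrating `s'` from `0` bounds `s`, and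
`u' = s + χ u q` bounds `u'`.
-/

open Real Set MeasureTheory Filter

open Topology

section MeanValue

variable {f f' : ℝ → ℝ} {p r C : ℝ}

lemma lt_of_hasDerivAt_pos (hpr : p < r) (hf : ContinuousOn f (Icc p r))
    (hf' : ∀ x ∈ Ioo p r, HasDerivAt f (f' x) x) (hpos : ∀ x ∈ Ioo p r, 0 < f' x) :
    f p < f r := by
  obtain ⟨c, hc, hslope⟩ := exists_hasDerivAt_eq_slope f f' hpr hf hf'
  have := hpos c hc
  rw [hslope, div_pos_iff_of_pos_right (sub_pos.2 hpr)] at this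
  linarith

lemma sub_le_mul_of_hasDerivAt_le (hpr : p ≤ r) (hf : ContinuousOn f (Icc p r))
    (hf' : ∀ x ∈ Ioo p r, HasDerivAt f (f' x) x) (hle : ∀ x ∈ Ioo p r, f' x ≤ C) :
    f r - f p ≤ C * (r - p) := by
  rcases hpr.eq_or_lt with rfl | hpr
  · simp
  obtain ⟨c, hc, hslope⟩ := exists_hasDerivAt_eq_slope f f' hpr hf hf'
  have := hle c hc
  rwa [hslope, div_le_iff₀ (sub_pos.2 hpr)] at this

lemma abs_sub_le_mul_of_hasDerivAt (hpr : p ≤ r) (hf : ContinuousOn f (Icc p r))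
    (hf' : ∀ x ∈ Ioo p r, HasDerivAt f (f' x) x) (hle : ∀ x ∈ Ioo p r, |f' x| ≤ C) :
    |f r - f p| ≤ C * (r - p) := by
  have hup := sub_le_mul_of_hasDerivAt_le hpr hf hf' fun x hx => (le_abs_self _).trans (hle x hx)
  have hlow := sub_le_mul_of_hasDerivAt_le hpr hf.neg (fun x hx => (hf' x hx).neg)
    fun x hx => (neg_le_abs _).trans (hle x hx)
  simp only [Pi.neg_apply] at hlow
  exact abs_le.2 ⟨by linarith, hup⟩

end MeanValue

lemma abs_le_of_hasDerivAt_le_of_eq_zero {q q' : ℝ → ℝ} {μ L x : ℝ} (hμ : 0 ≤ μ)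
    (hx : x ∈ Icc 0 L) (hq : ContinuousOn q (Icc 0 L))
    (hq' : ∀ y ∈ Ioo 0 L, HasDerivAt q (q' y) y) (hle : ∀ y ∈ Ioo 0 L, q' y ≤ μ)
    (h0 : q 0 = 0) (hL : q L = 0) : |q x| ≤ μ * L := by
  have hleft := sub_le_mul_of_hasDerivAt_le hx.1 (hq.mono (Icc_subset_Icc_right hx.2))
    (fun y hy => hq' y (Ioo_subset_Ioo_right hx.2 hy))
    (fun y hy => hle y (Ioo_subset_Ioo_right hx.2 hy))
  have hright := sub_le_mul_of_hasDerivAt_le hx.2 (hq.mono (Icc_subset_Icc_left hx.1))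
    (fun y hy => hq' y (Ioo_subset_Ioo_left hx.1 hy))
    (fun y hy => hle y (Ioo_subset_Ioo_left hx.1 hy))
  rw [h0] at hleft
  rw [hL] at hright
  exact abs_le.2 ⟨by nlinarith [hx.1], by nlinarith [hx.2]⟩

lemma not_eventually_pos_of_isMaxOn {f w s g : ℝ → ℝ} {α β x₀ : ℝ} (hαβ : α < β)
    (hx₀ : x₀ ∈ Icc α β) (hmax : IsMaxOn f (Icc α β) x₀) (hf : ContinuousOn f (Icc α β))
    (hf' : ∀ x ∈ Ioo α β, HasDerivAt f (w x * s x) x) (hw : ∀ x ∈ Ioo α β, 0 < w x)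
    (hs : ContinuousOn s (Icc α β)) (hs' : ∀ x ∈ Ioo α β, HasDerivAt s (g x) x)
    (hsα : s α = 0) (hsβ : s β = 0) : ¬ ∀ᶠ x in 𝓝 x₀, 0 < g x := by
  intro hg
  obtain ⟨ε, hε, hgε⟩ := Metric.eventually_nhds_iff.1 hg
  have hsx₀ : s x₀ = 0 := by
    rcases hx₀.1.eq_or_lt with rfl | hαx₀
    · exact hsα
    rcases hx₀.2.eq_or_lt with rfl | hx₀β
    · exact hsβ
    have := (hmax.isLocalMax (Icc_mem_nhds hαx₀ hx₀β)).hasDerivAt_eq_zero (hf' x₀ ⟨hαx₀, hx₀β⟩)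
    exact (mul_eq_zero.1 this).resolve_left (hw x₀ ⟨hαx₀, hx₀β⟩).ne'
  rcases hx₀.2.lt_or_eq with hx₀β | rfl
  · set r := min (x₀ + ε / 2) β
    have hx₀r : x₀ < r := lt_min (by linarith) hx₀β
    have hrβ : r ≤ β := min_le_right _ _
    have hIcc : Icc x₀ r ⊆ Icc α β := Icc_subset_Icc hx₀.1 hrβ
    have hIoo : Ioo x₀ r ⊆ Ioo α β := Ioo_subset_Ioo hx₀.1 hrβ
    have hg : ∀ y ∈ Ioo x₀ r, 0 < g y := fun y hy => hgε <| by
      rw [Real.dist_eq, abs_lt]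
      constructor <;> linarith [hy.1, hy.2, min_le_left (x₀ + ε / 2) β]
    have hspos : ∀ y ∈ Ioo x₀ r, 0 < s y := fun y hy => hsx₀ ▸
      lt_of_hasDerivAt_pos hy.1 (hs.mono ((Icc_subset_Icc_right hy.2.le).trans hIcc))
        (fun z hz => hs' z (hIoo (Ioo_subset_Ioo_right hy.2.le hz)))
        (fun z hz => hg z (Ioo_subset_Ioo_right hy.2.le hz))
    have hlt := lt_of_hasDerivAt_pos hx₀r (hf.mono hIcc) (fun y hy => hf' y (hIoo hy))
      (fun y hy => mul_pos (hw y (hIoo hy)) (hspos y hy))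
    exact (hmax (hIcc (right_mem_Icc.2 hx₀r.le))).not_gt hlt
  · set p := max (x₀ - ε / 2) α
    have hpx₀ : p < x₀ := max_lt (by linarith) hαβ
    have hαp : α ≤ p := le_max_right _ _
    have hIcc : Icc p x₀ ⊆ Icc α x₀ := Icc_subset_Icc hαp le_rfl
    have hIoo : Ioo p x₀ ⊆ Ioo α x₀ := Ioo_subset_Ioo hαp le_rfl
    have hg : ∀ y ∈ Ioo p x₀, 0 < g y := fun y hy => hgε <| by
      rw [Real.dist_eq, abs_lt]
      constructor <;> linarith [hy.1, hy.2, le_max_left (x₀ - ε / 2) α]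
    have hsneg : ∀ y ∈ Ioo p x₀, s y < 0 := fun y hy => hsx₀ ▸
      lt_of_hasDerivAt_pos hy.2 (hs.mono ((Icc_subset_Icc_left hy.1.le).trans hIcc))
        (fun z hz => hs' z (hIoo (Ioo_subset_Ioo_left hy.1.le hz)))
        (fun z hz => hg z (Ioo_subset_Ioo_left hy.1.le hz))
    have hlt := lt_of_hasDerivAt_pos hpx₀ (hf.neg.mono hIcc) (fun y hy => (hf' y (hIoo hy)).neg)
      (fun y hy => neg_pos.2 (mul_neg_of_pos_of_neg (hw y (hIoo hy)) (hsneg y hy)))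
    exact (hmax (hIcc (left_mem_Icc.2 hpx₀.le))).not_gt (by simpa using hlt)

lemma hasDerivAt_logDeriv_s8 {v : ℝ → ℝ} (hv : ContDiff ℝ 2 v) {x : ℝ} (hx : v x ≠ 0) :
    HasDerivAt (logDeriv v) (deriv (deriv v) x / v x - logDeriv v x ^ 2) x := by
  refine ((hv.differentiable_deriv_two x).hasDerivAt.div
    (hv.differentiable two_ne_zero x).hasDerivAt hx).congr_deriv ?_
  rw [logDeriv_apply]
  field_simp

noncomputable def flux (χ : ℝ) (u v : ℝ → ℝ) (x : ℝ) : ℝ := deriv u x - χ * (u x * deriv v x / v x)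

/-- `u v^(-χ)`, written through `exp ∘ log` since `v > 0` on `[0, L]`. -/
noncomputable def weightedDensity (χ : ℝ) (u v : ℝ → ℝ) (x : ℝ) : ℝ := u x * exp (-χ * log (v x))

namespace IsStatSol

variable {χ a b μ ν L : ℝ} {u v : ℝ → ℝ}

lemma deriv_deriv_div_sub_logDeriv_sq_le (h : IsStatSol χ a b μ ν L u v) (hν : 0 ≤ ν) {x : ℝ}
    (hx : x ∈ Ioo 0 L) :
    deriv (deriv v) x / v x - logDeriv v x ^ 2 ≤ μ := by
  obtain ⟨-, -, hupos, hvpos, -, heqv, -⟩ := h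
  have hu := hupos x (Ioo_subset_Icc_self hx)
  have hv := hvpos x (Ioo_subset_Icc_self hx)
  rw [show deriv (deriv v) x = μ * v x - ν * u x by linarith [heqv x hx], sub_div,
    mul_div_cancel_right₀ _ hv.ne']
  have : 0 ≤ ν * u x / v x := by positivity
  nlinarith [sq_nonneg (logDeriv v x)]

lemma abs_logDeriv_le (h : IsStatSol χ a b μ ν L u v) (hμ : 0 ≤ μ) (hν : 0 ≤ ν) {x : ℝ}
    (hx : x ∈ Icc 0 L) : |logDeriv v x| ≤ μ * L := by
  have hle : ∀ y ∈ Ioo 0 L, _ ≤ μ := fun y hy => h.deriv_deriv_div_sub_logDeriv_sq_le hν hy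
  obtain ⟨-, hv, -, hvpos, -, -, -, -, hv0, hvL⟩ := h
  have hderiv : ∀ y ∈ Icc 0 L, HasDerivAt (logDeriv v) _ y :=
    fun y hy => hasDerivAt_logDeriv_s8 hv (hvpos y hy).ne'
  exact abs_le_of_hasDerivAt_le_of_eq_zero hμ hx
    (fun y hy => (hderiv y hy).continuousAt.continuousWithinAt)
    (fun y hy => hderiv y (Ioo_subset_Icc_self hy)) hle
    (by simp [logDeriv_apply, hv0]) (by simp [logDeriv_apply, hvL])

lemma log_sub_log_le (h : IsStatSol χ a b μ ν L u v) (hμ : 0 ≤ μ) (hν : 0 ≤ ν) {x y : ℝ}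
    (hx : x ∈ Icc 0 L) (hy : y ∈ Icc 0 L) : log (v x) - log (v y) ≤ μ * L * L := by
  have hderiv : ∀ z ∈ Icc 0 L, HasDerivAt (fun z => log (v z)) (logDeriv v z) z := fun z hz =>
    ((h.2.1.differentiable two_ne_zero z).hasDerivAt.log (h.2.2.2.1 z hz).ne').congr_deriv
      (div_eq_mul_inv _ _).symm
  have hosc : ∀ p ∈ Icc 0 L, ∀ r ∈ Icc 0 L, p ≤ r →
      |log (v r) - log (v p)| ≤ μ * L * (r - p) := fun p hp r hr hpr =>
    abs_sub_le_mul_of_hasDerivAt hpr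
      (fun z hz => (hderiv z (Icc_subset_Icc hp.1 hr.2 hz)).continuousAt.continuousWithinAt)
      (fun z hz => hderiv z (Icc_subset_Icc hp.1 hr.2 (Ioo_subset_Icc_self hz)))
      (fun z hz => h.abs_logDeriv_le hμ hν (Icc_subset_Icc hp.1 hr.2 (Ioo_subset_Icc_self hz)))
  have hμL : 0 ≤ μ * L := mul_nonneg hμ (hx.1.trans hx.2)
  rcases le_total x y with hxy | hyx
  · have := (neg_le_abs _).trans (hosc x hx y hy hxy)
    nlinarith [hx.1, hy.2]
  · have := (le_abs_self _).trans (hosc y hy x hx hyx)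
    nlinarith [hy.1, hx.2]

lemma flux_at_zero (h : IsStatSol χ a b μ ν L u v) : flux χ u v 0 = 0 := by
  obtain ⟨-, -, -, -, -, -, hu0, -, hv0, -⟩ := h
  simp [flux, hu0, hv0]

lemma flux_at_L (h : IsStatSol χ a b μ ν L u v) : flux χ u v L = 0 := by
  obtain ⟨-, -, -, -, -, -, -, huL, -, hvL⟩ := h
  simp [flux, huL, hvL]

lemma differentiableAt_flux (h : IsStatSol χ a b μ ν L u v) {x : ℝ} (hx : x ∈ Icc 0 L) :
    DifferentiableAt ℝ (fun y => u y * deriv v y / v y) x :=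
  ((h.1.differentiable two_ne_zero x).mul (h.2.1.differentiable_deriv_two x)).div
    (h.2.1.differentiable two_ne_zero x) (h.2.2.2.1 x hx).ne'

lemma continuousOn_flux (h : IsStatSol χ a b μ ν L u v) : ContinuousOn (flux χ u v) (Icc 0 L) :=
  fun x hx => (((h.1.differentiable_deriv_two x).sub
    ((h.differentiableAt_flux hx).const_mul χ)).continuousAt).continuousWithinAt

lemma hasDerivAt_flux (h : IsStatSol χ a b μ ν L u v) {x : ℝ} (hx : x ∈ Ioo 0 L) :
    HasDerivAt (flux χ u v) (u x * (b * u x - a)) x :=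
  ((h.1.differentiable_deriv_two x).hasDerivAt.sub
    ((h.differentiableAt_flux (Ioo_subset_Icc_self hx)).hasDerivAt.const_mul χ)).congr_deriv
    (by linarith [h.2.2.2.2.1 x hx])

lemma hasDerivAt_weightedDensity (h : IsStatSol χ a b μ ν L u v) {x : ℝ} (hx : x ∈ Icc 0 L) :
    HasDerivAt (weightedDensity χ u v) (exp (-χ * log (v x)) * flux χ u v x) x := by
  have hv := (h.2.1.differentiable two_ne_zero x).hasDerivAt
  refine ((h.1.differentiable two_ne_zero x).hasDerivAt.mul
    ((hv.log (h.2.2.2.1 x hx).ne').const_mul (-χ)).exp).congr_deriv ?_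
  simp only [flux]
  ring

lemma le_div_of_isMaxOn (h : IsStatSol χ a b μ ν L u v) (ha : 0 ≤ a) (hb : 0 < b) (hL : 0 < L)
    {x₀ : ℝ} (hx₀ : x₀ ∈ Icc 0 L) (hmax : IsMaxOn (weightedDensity χ u v) (Icc 0 L) x₀) :
    u x₀ ≤ a / b := by
  by_contra! hgt
  refine not_eventually_pos_of_isMaxOn hL hx₀ hmax
    (fun x hx => (h.hasDerivAt_weightedDensity hx).continuousAt.continuousWithinAt)
    (fun x hx => h.hasDerivAt_weightedDensity (Ioo_subset_Icc_self hx)) (fun x _ => exp_pos _)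
    h.continuousOn_flux (fun x hx => h.hasDerivAt_flux hx) h.flux_at_zero h.flux_at_L ?_
  filter_upwards [(h.1.continuous.tendsto x₀).eventually (lt_mem_nhds hgt)] with x hx
  have hbu : a < b * u x := by rwa [div_lt_iff₀' hb] at hx
  exact mul_pos ((div_nonneg ha hb.le).trans_lt hx) (sub_pos.2 hbu)

lemma le_div_mul_exp (h : IsStatSol χ a b μ ν L u v) (hχ : 0 ≤ χ) (ha : 0 ≤ a) (hb : 0 < b)
    (hμ : 0 ≤ μ) (hν : 0 ≤ ν) (hL : 0 < L) {x : ℝ} (hx : x ∈ Icc 0 L) :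
    u x ≤ a / b * exp (χ * (μ * L * L)) := by
  obtain ⟨x₀, hx₀, hmax⟩ := isCompact_Icc.exists_isMaxOn (nonempty_Icc.2 hL.le)
    fun x hx => (h.hasDerivAt_weightedDensity hx).continuousAt.continuousWithinAt
  have hdensity : ∀ y, u y = weightedDensity χ u v y * exp (χ * log (v y)) := fun y => by
    rw [weightedDensity, mul_assoc, ← exp_add, neg_mul, neg_add_cancel, exp_zero, mul_one]
  calc u x = weightedDensity χ u v x * exp (χ * log (v x)) := hdensity x
    _ ≤ weightedDensity χ u v x₀ * exp (χ * log (v x)) := by gcongr; exact hmax hx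
    _ = u x₀ * exp (χ * (log (v x) - log (v x₀))) := by
      rw [hdensity x₀, mul_assoc, ← exp_add, weightedDensity]
      ring_nf
    _ ≤ a / b * exp (χ * (μ * L * L)) := by
      gcongr
      · exact h.le_div_of_isMaxOn ha hb hL hx₀ hmax
      · exact h.log_sub_log_le hμ hν hx hx₀

lemma abs_flux_le (h : IsStatSol χ a b μ ν L u v) (ha : 0 ≤ a) (hb : 0 ≤ b) {M : ℝ}
    (huM : ∀ x ∈ Icc 0 L, u x ≤ M) {x : ℝ} (hx : x ∈ Icc 0 L) :
    |flux χ u v x| ≤ M * (b * M + a) * L := by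
  have hsource : ∀ y ∈ Ioo 0 x, |u y * (b * u y - a)| ≤ M * (b * M + a) := fun y hy => by
    have hy' : y ∈ Icc 0 L := ⟨hy.1.le, hy.2.le.trans hx.2⟩
    have hu := h.2.2.1 y hy'
    have hyM := huM y hy'
    rw [abs_mul, abs_of_pos hu]
    exact mul_le_mul hyM (abs_le.2 ⟨by nlinarith, by nlinarith⟩) (abs_nonneg _) (hu.le.trans hyM)
  have hM : 0 ≤ M * (b * M + a) := by
    have : 0 ≤ M := (h.2.2.1 x hx).le.trans (huM x hx)
    positivity
  have := abs_sub_le_mul_of_hasDerivAt hx.1 (h.continuousOn_flux.mono (Icc_subset_Icc_right hx.2))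
    (fun y hy => h.hasDerivAt_flux (Ioo_subset_Ioo_right hx.2 hy)) hsource
  rw [h.flux_at_zero, sub_zero, sub_zero] at this
  exact this.trans (mul_le_mul_of_nonneg_left hx.2 hM)

lemma abs_deriv_le (h : IsStatSol χ a b μ ν L u v) (hχ : 0 ≤ χ) (ha : 0 ≤ a) (hb : 0 ≤ b)
    (hμ : 0 ≤ μ) (hν : 0 ≤ ν) {M : ℝ} (huM : ∀ x ∈ Icc 0 L, u x ≤ M) {x : ℝ}
    (hx : x ∈ Icc 0 L) : |deriv u x| ≤ M * (b * M + a) * L + χ * (M * (μ * L)) := by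
  have hu := h.2.2.1 x hx
  have hdecomp : deriv u x = flux χ u v x + χ * (u x * logDeriv v x) := by
    rw [flux, logDeriv_apply, mul_div_assoc]
    ring
  calc |deriv u x| ≤ |flux χ u v x| + χ * (u x * |logDeriv v x|) := by
        rw [hdecomp]
        exact (abs_add_le _ _).trans_eq (by rw [abs_mul, abs_mul, abs_of_nonneg hχ, abs_of_pos hu])
    _ ≤ M * (b * M + a) * L + χ * (M * (μ * L)) := by
      gcongr
      · exact h.abs_flux_le ha hb huM hx
      · exact hu.le.trans (huM x hx)
      · exact huM x hx
      · exact h.abs_logDeriv_le hμ hν hx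

end IsStatSol

theorem stmt_8 (χ a b μ L : ℝ) (hχ : 0 < χ) (ha : 0 < a) (hb : 0 < b)
    (hμ : 0 < μ) (hL : 0 < L) :
    ∃ C : ℝ, 0 < C ∧
      ∀ ν : ℝ, 0 < ν →
        ∀ u v : ℝ → ℝ, IsStatSol χ a b μ ν L u v → NonConst L u →
          ∀ x ∈ Icc (0 : ℝ) L, |u x| ≤ C ∧ |deriv u x| ≤ C := by
  set M := a / b * exp (χ * (μ * L * L))
  refine ⟨max M (M * (b * M + a) * L + χ * (M * (μ * L))), lt_max_of_lt_left (by positivity), ?_⟩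
  intro ν hν u v h _ x hx
  have huM : ∀ y ∈ Icc 0 L, u y ≤ M := fun y hy =>
    h.le_div_mul_exp hχ.le ha.le hb hμ.le hν.le hL hy
  refine ⟨?_, ?_⟩
  · rw [abs_of_pos (h.2.2.1 x hx)]
    exact (huM x hx).trans (le_max_left _ _)
  · exact (h.abs_deriv_le hχ.le ha.le hb.le hμ.le hν.le huM hx).trans (le_max_right _ _)
end

section
/- There exists a constant C₂ > 0, depending only on a, b, μ, ν and L (and in particular independent of χ and of the particular solution), such that for every χ > 0 and every non-constant positive stationary solution (u, v) of the chemotaxis system with parameter χ, one has ∫₀^L v(x)² dx + ∫₀^L v'(x)² dx + ∫₀^L v''(x)² dx ≤ C₂. -/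
/-!
Integrating the `u`-equation over `[0, L]`, the flux `u' - χ u v' / v` vanishes at both ends by
the Neumann conditions, so `b ∫ u² = a ∫ u`; with Cauchy–Schwarz this gives `∫ u² ≤ a² L / b²`
whatever `χ` is. Testing the `v`-equation with `v` gives
`∫ v'² + μ ∫ v² = ν ∫ u v ≤ (μ / 2) ∫ v² + (ν² / 2μ) ∫ u²`, and `v'' = μ v - ν u` then bounds
`∫ v''²` by `∫ v²` and `∫ u²`.
-/

open Real Set MeasureTheory Filter

theorem sq_intervalIntegral_le {f : ℝ → ℝ} {a b : ℝ} (hab : a ≤ b) (hf : Continuous f) :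
    (∫ x in a..b, f x) ^ 2 ≤ (b - a) * ∫ x in a..b, f x ^ 2 := by
  rcases hab.eq_or_lt with rfl | hab
  · simp
  have hjensen := (even_two.convexOn_pow (𝕜 := ℝ)).map_set_average_le (continuousOn_pow 2)
    isClosed_univ (μ := volume) (t := uIoc a b) (f := f) (by simp [uIoc_of_le hab.le, hab])
    (by simp [uIoc_of_le hab.le]) (by simp) (hf.integrableOn_uIoc) ((hf.pow 2).integrableOn_uIoc)
  have hba : 0 < b - a := sub_pos.mpr hab
  rw [interval_average_eq, interval_average_eq, smul_eq_mul, smul_eq_mul, mul_pow,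
    inv_pow, ← div_eq_inv_mul, ← div_eq_inv_mul, div_le_div_iff₀ (by positivity) hba] at hjensen
  nlinarith

theorem integral_mul_deriv_deriv_eq_neg {v : ℝ → ℝ} {a b : ℝ} (hv : ContDiff ℝ 2 v)
    (ha : deriv v a = 0) (hb : deriv v b = 0) :
    ∫ x in a..b, v x * deriv (deriv v) x = -∫ x in a..b, deriv v x ^ 2 := by
  have hdv : ContDiff ℝ 1 (deriv v) := hv.iterate_deriv' 1 1
  rw [intervalIntegral.integral_mul_deriv_eq_deriv_mul (u' := deriv v)
    (fun x _ => (hv.differentiable two_ne_zero x).hasDerivAt)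
    (fun x _ => (hdv.differentiable one_ne_zero x).hasDerivAt)
    (hdv.continuous.intervalIntegrable a b) ((hdv.continuous_deriv le_rfl).intervalIntegrable a b)]
  simp [ha, hb, sq]

def IsNeumannElliptic (μ ν L : ℝ) (u v : ℝ → ℝ) : Prop :=
  ContDiff ℝ 2 v ∧ (∀ x ∈ Ioo (0 : ℝ) L, deriv (deriv v) x = μ * v x - ν * u x) ∧
  deriv v 0 = 0 ∧ deriv v L = 0

namespace IsNeumannElliptic

variable {μ ν L : ℝ} {u v : ℝ → ℝ}

theorem integral_deriv_sq_add_mul_integral_sq (h : IsNeumannElliptic μ ν L u v) (hL : 0 ≤ L)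
    (hu : Continuous u) :
    (∫ x in 0..L, deriv v x ^ 2) + μ * ∫ x in 0..L, v x ^ 2 = ν * ∫ x in 0..L, u x * v x := by
  obtain ⟨hv, heq, hv0, hvL⟩ := h
  have hvc := hv.continuous
  have hparts := integral_mul_deriv_deriv_eq_neg hv hv0 hvL
  rw [intervalIntegral.integral_congr_Ioo_of_le hL
      (g := fun x => μ * v x ^ 2 - ν * (u x * v x)) (fun x hx => by simp only [heq x hx]; ring),
    intervalIntegral.integral_sub, intervalIntegral.integral_const_mul,
    intervalIntegral.integral_const_mul] at hparts
  · linarith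
  all_goals exact Continuous.intervalIntegrable (by fun_prop) _ _

theorem integral_deriv_sq_add_half_mul_integral_sq_le (h : IsNeumannElliptic μ ν L u v)
    (hL : 0 ≤ L) (hμ : 0 < μ) (hu : Continuous u) :
    (∫ x in 0..L, deriv v x ^ 2) + μ / 2 * ∫ x in 0..L, v x ^ 2
      ≤ ν ^ 2 / (2 * μ) * ∫ x in 0..L, u x ^ 2 := by
  have hvc := h.1.continuous
  have hyoung : ∀ x, ν * (u x * v x) ≤ μ / 2 * v x ^ 2 + ν ^ 2 / (2 * μ) * u x ^ 2 := by
    intro x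
    have hsq : 0 ≤ (μ * v x - ν * u x) ^ 2 / (2 * μ) := by positivity
    have hexpand : (μ * v x - ν * u x) ^ 2 / (2 * μ)
        = μ / 2 * v x ^ 2 + ν ^ 2 / (2 * μ) * u x ^ 2 - ν * (u x * v x) := by
      field_simp; ring
    linarith
  have hint : ∫ x in 0..L, ν * (u x * v x)
      ≤ ∫ x in 0..L, (μ / 2 * v x ^ 2 + ν ^ 2 / (2 * μ) * u x ^ 2) :=
    intervalIntegral.integral_mono_on hL (Continuous.intervalIntegrable (by fun_prop) _ _)
      (Continuous.intervalIntegrable (by fun_prop) _ _) fun x _ => hyoung x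
  rw [intervalIntegral.integral_add, intervalIntegral.integral_const_mul,
    intervalIntegral.integral_const_mul, intervalIntegral.integral_const_mul] at hint
  · linarith [h.integral_deriv_sq_add_mul_integral_sq hL hu]
  all_goals exact Continuous.intervalIntegrable (by fun_prop) _ _

theorem integral_deriv_deriv_sq_le (h : IsNeumannElliptic μ ν L u v) (hL : 0 ≤ L)
    (hu : Continuous u) :
    ∫ x in 0..L, deriv (deriv v) x ^ 2
      ≤ 2 * μ ^ 2 * (∫ x in 0..L, v x ^ 2) + 2 * ν ^ 2 * ∫ x in 0..L, u x ^ 2 := by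
  have hvc := h.1.continuous
  rw [intervalIntegral.integral_congr_Ioo_of_le hL (g := fun x => (μ * v x - ν * u x) ^ 2)
    (fun x hx => by simp only [h.2.1 x hx]), ← intervalIntegral.integral_const_mul,
    ← intervalIntegral.integral_const_mul, ← intervalIntegral.integral_add]
  · refine intervalIntegral.integral_mono_on hL (Continuous.intervalIntegrable (by fun_prop) _ _)
      (Continuous.intervalIntegrable (by fun_prop) _ _) fun x _ => ?_
    nlinarith [sq_nonneg (μ * v x + ν * u x)]
  all_goals exact Continuous.intervalIntegrable (by fun_prop) _ _

theorem h2_norm_sq_le (h : IsNeumannElliptic μ ν L u v) (hL : 0 ≤ L) (hμ : 0 < μ)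
    (hu : Continuous u) :
    (∫ x in 0..L, v x ^ 2) + (∫ x in 0..L, deriv v x ^ 2) + (∫ x in 0..L, deriv (deriv v) x ^ 2)
      ≤ (ν ^ 2 / μ ^ 2 + ν ^ 2 / (2 * μ) + 4 * ν ^ 2) * ∫ x in 0..L, u x ^ 2 := by
  set I := ∫ x in 0..L, u x ^ 2
  set J := ∫ x in 0..L, v x ^ 2
  set J' := ∫ x in 0..L, deriv v x ^ 2
  have henergy : J' + μ / 2 * J ≤ ν ^ 2 / (2 * μ) * I :=
    h.integral_deriv_sq_add_half_mul_integral_sq_le hL hμ hu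
  have hJ_nonneg : 0 ≤ J := intervalIntegral.integral_nonneg hL fun x _ => sq_nonneg (v x)
  have hJ'_nonneg : 0 ≤ J' := intervalIntegral.integral_nonneg hL fun x _ => sq_nonneg (deriv v x)
  have hJ' : J' ≤ ν ^ 2 / (2 * μ) * I := by nlinarith
  have hJ : J ≤ ν ^ 2 / μ ^ 2 * I :=
    calc J = 2 / μ * (μ / 2 * J) := by field_simp
      _ ≤ 2 / μ * (ν ^ 2 / (2 * μ) * I) :=
        mul_le_mul_of_nonneg_left (by linarith) (by positivity)
      _ = ν ^ 2 / μ ^ 2 * I := by field_simp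
  have hJ'' : ∫ x in 0..L, deriv (deriv v) x ^ 2 ≤ 4 * ν ^ 2 * I :=
    calc _ ≤ 2 * μ ^ 2 * J + 2 * ν ^ 2 * I := h.integral_deriv_deriv_sq_le hL hu
      _ ≤ 2 * μ ^ 2 * (ν ^ 2 / μ ^ 2 * I) + 2 * ν ^ 2 * I := by gcongr
      _ = 4 * ν ^ 2 * I := by field_simp; ring
  linarith

end IsNeumannElliptic

namespace IsStatSol

variable {χ a b μ ν L : ℝ} {u v : ℝ → ℝ}

theorem isNeumannElliptic (h : IsStatSol χ a b μ ν L u v) : IsNeumannElliptic μ ν L u v := by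
  obtain ⟨-, hv, -, -, -, heqv, -, -, hv0, hvL⟩ := h
  exact ⟨hv, fun x hx => by linarith [heqv x hx], hv0, hvL⟩

theorem mul_integral_sq_eq (h : IsStatSol χ a b μ ν L u v) (hL : 0 ≤ L) :
    b * ∫ x in 0..L, u x ^ 2 = a * ∫ x in 0..L, u x := by
  obtain ⟨hu, hv, -, hvpos, hequ, -, hu0, huL, hv0, hvL⟩ := h
  have hdu : ContDiff ℝ 1 (deriv u) := hu.iterate_deriv' 1 1
  have hdv : ContDiff ℝ 1 (deriv v) := hv.iterate_deriv' 1 1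
  set flux := fun y => deriv u y - χ * (u y * deriv v y / v y)
  have hftc : ∫ x in 0..L, (b * u x ^ 2 - a * u x) = flux L - flux 0 := by
    apply intervalIntegral.integral_eq_sub_of_hasDerivAt_of_le hL
    · exact hdu.continuous.continuousOn.sub (continuousOn_const.mul
        ((hu.continuous.mul hdv.continuous).continuousOn.div hv.continuous.continuousOn
          fun x hx => (hvpos x hx).ne'))
    · intro x hx
      have hvx : v x ≠ 0 := (hvpos x (Ioo_subset_Icc_self hx)).ne'
      have hquot : DifferentiableAt ℝ (fun y => u y * deriv v y / v y) x :=
        ((hu.differentiable two_ne_zero x).mul (hdv.differentiable one_ne_zero x)).div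
          (hv.differentiable two_ne_zero x) hvx
      have hflux := (hdu.differentiable one_ne_zero x).hasDerivAt.sub
        (hquot.hasDerivAt.const_mul χ)
      rwa [show deriv (deriv u) x - χ * deriv (fun y => u y * deriv v y / v y) x
        = b * u x ^ 2 - a * u x by linear_combination hequ x hx] at hflux
    · exact Continuous.intervalIntegrable (by fun_prop) _ _
  rw [intervalIntegral.integral_sub, intervalIntegral.integral_const_mul,
    intervalIntegral.integral_const_mul] at hftc
  · simp only [flux, hu0, huL, hv0, hvL, mul_zero, zero_div, sub_self] at hftc
    linarith
  all_goals exact Continuous.intervalIntegrable (by fun_prop) _ _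

theorem integral_sq_le (h : IsStatSol χ a b μ ν L u v) (hL : 0 < L) (hb : 0 < b) :
    ∫ x in 0..L, u x ^ 2 ≤ a ^ 2 * L / b ^ 2 := by
  set I := ∫ x in 0..L, u x ^ 2
  have hmass : b * I = a * ∫ x in 0..L, u x := h.mul_integral_sq_eq hL.le
  have hcs : (∫ x in 0..L, u x) ^ 2 ≤ L * I := by
    simpa using sq_intervalIntegral_le hL.le h.1.continuous
  have hI_nonneg : 0 ≤ I := intervalIntegral.integral_nonneg hL.le fun x _ => sq_nonneg (u x)
  rw [le_div_iff₀ (by positivity)]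
  rcases hI_nonneg.eq_or_lt with h0 | hI
  · rw [← h0, zero_mul]
    positivity
  refine le_of_mul_le_mul_left ?_ hI
  calc I * (I * b ^ 2) = (b * I) ^ 2 := by ring
    _ = a ^ 2 * (∫ x in 0..L, u x) ^ 2 := by rw [hmass]; ring
    _ ≤ a ^ 2 * (L * I) := by gcongr
    _ = I * (a ^ 2 * L) := by ring

end IsStatSol

theorem stmt_9 (a b μ ν L : ℝ) (ha : 0 < a) (hb : 0 < b)
    (hμ : 0 < μ) (hν : 0 < ν) (hL : 0 < L) :
    ∃ C : ℝ, 0 < C ∧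
      ∀ χ : ℝ, 0 < χ →
        ∀ u v : ℝ → ℝ, IsStatSol χ a b μ ν L u v → NonConst L u →
          (∫ x in (0 : ℝ)..L, (v x)^2) + (∫ x in (0 : ℝ)..L, (deriv v x)^2)
            + (∫ x in (0 : ℝ)..L, (deriv (deriv v) x)^2) ≤ C := by
  refine ⟨(ν ^ 2 / μ ^ 2 + ν ^ 2 / (2 * μ) + 4 * ν ^ 2) * (a ^ 2 * L / b ^ 2), by positivity, ?_⟩
  intro χ _ u v hsol _
  calc _ ≤ (ν ^ 2 / μ ^ 2 + ν ^ 2 / (2 * μ) + 4 * ν ^ 2) * ∫ x in 0..L, u x ^ 2 :=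
        hsol.isNeumannElliptic.h2_norm_sq_le hL.le hμ hsol.1.continuous
    _ ≤ _ := by gcongr; exact hsol.integral_sq_le hL hb
end

section
/- Let (u, v) be a non-constant positive stationary solution of the chemotaxis system. If u is monotone increasing on (0, L) (i.e., u'(x) ≥ 0 for all x ∈ (0, L)), then v'(x) > 0 for every x ∈ (0, L); similarly, if u is monotone decreasing on (0, L), then v'(x) < 0 for every x ∈ (0, L). -/
open Real Set MeasureTheory Filter
open Topology

theorem IsLocalMin.deriv_deriv_nonneg {f : ℝ → ℝ} {x : ℝ} (hmin : IsLocalMin f x)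
    (hf : ContinuousAt f x) : 0 ≤ deriv (deriv f) x := by
  by_contra! hneg
  have hmax := isLocalMax_of_deriv_deriv_neg hneg hmin.deriv_eq_zero hf
  have hconst : f =ᶠ[𝓝 x] fun _ => f x :=
    (hmin.and hmax).mono fun y hy => le_antisymm hy.2 hy.1
  have : deriv (deriv f) x = 0 := by simp [hconst.deriv.deriv_eq]
  linarith

theorem IsMinOn.nonneg_of_hasDerivAt_left {f : ℝ → ℝ} {p q d : ℝ} (hpq : p < q)
    (hmin : IsMinOn f (Icc p q) p) (hd : HasDerivAt f d p) : 0 ≤ d := by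
  have hslope : Tendsto (slope f p) (𝓝[>] p) (𝓝 d) :=
    (hasDerivAt_iff_tendsto_slope.mp hd).mono_left (nhdsWithin_mono p fun y hy => ne_of_gt hy)
  refine ge_of_tendsto hslope ?_
  filter_upwards [Ioo_mem_nhdsGT hpq] with y hy
  exact (slope_nonneg_iff_of_le hy.1.le).mpr (hmin ⟨hy.1.le, hy.2.le⟩)

section MinimumPrinciple

variable {w : ℝ → ℝ} {μ p q : ℝ}

theorem nonneg_of_deriv_deriv_le (hμ : 0 < μ) (hw : ContinuousOn w (Icc p q))
    (hineq : ∀ x ∈ Ioo p q, deriv (deriv w) x ≤ μ * w x) (hp : 0 ≤ w p) (hq : 0 ≤ w q) :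
    ∀ x ∈ Icc p q, 0 ≤ w x := by
  by_contra! ⟨z, hz, hwz⟩
  obtain ⟨m, hm, hmin⟩ := isCompact_Icc.exists_isMinOn ⟨z, hz⟩ hw
  have hwm : w m < 0 := (hmin hz).trans_lt hwz
  have hm' : m ∈ Ioo p q :=
    ⟨hm.1.lt_of_ne (by rintro rfl; linarith), hm.2.lt_of_ne (by rintro rfl; linarith)⟩
  have hIcc : Icc p q ∈ 𝓝 m := Icc_mem_nhds hm'.1 hm'.2
  have := (hmin.isLocalMin hIcc).deriv_deriv_nonneg (hw.continuousAt hIcc)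
  nlinarith [hineq m hm']

theorem nonpos_of_deriv_deriv_le_of_left (hμ : 0 ≤ μ) (hpq : p < q) (hw : Differentiable ℝ w)
    (hw' : DifferentiableOn ℝ (deriv w) (Ioo p q))
    (hineq : ∀ x ∈ Ioo p q, deriv (deriv w) x ≤ μ * w x) (hp : w p ≤ 0)
    (hp' : deriv w p ≤ 0) : w q ≤ 0 := by
  by_contra! hq
  set K := μ + 1
  set E := fun x => exp (K * (x - p))
  have hE : ∀ x, HasDerivAt E (K * E x) x := fun x => by
    simpa [E, mul_comm] using (((hasDerivAt_id x).sub_const p).const_mul K).exp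
  set ε := w q / E q
  have hε : 0 < ε := div_pos hq (exp_pos _)
  set g := fun x => w x - ε * (E x - 1)
  have hg : ∀ x, HasDerivAt g (deriv w x - ε * (K * E x)) x := fun x =>
    (hw x).hasDerivAt.sub (((hE x).sub_const 1).const_mul ε)
  have hg' : ∀ x ∈ Ioo p q,
      HasDerivAt (deriv g) (deriv (deriv w) x - ε * (K * (K * E x))) x := fun x hx => by
    rw [show deriv g = fun x => deriv w x - ε * (K * E x) from funext fun x => (hg x).deriv]
    exact ((hw'.differentiableAt (isOpen_Ioo.mem_nhds hx)).hasDerivAt).sub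
      (((hE x).const_mul K).const_mul ε)
  have hgp : g p ≤ 0 := by simpa [g, E] using hp
  have hgq : 0 < g q := by
    have : ε * E q = w q := div_mul_cancel₀ _ (exp_pos _).ne'
    simp only [g]; linarith
  obtain ⟨m, hm, hmin⟩ := isCompact_Icc.exists_isMinOn (nonempty_Icc.mpr hpq.le)
    (fun x _ => (hg x).continuousAt.continuousWithinAt)
  -- the barrier `ε (E - 1)` is a strict supersolution, so `g` has no interior minimum
  have hmp : m = p := by
    by_contra hmp
    have hgm : g m ≤ 0 := (hmin (left_mem_Icc.mpr hpq.le)).trans hgp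
    have hm' : m ∈ Ioo p q :=
      ⟨hm.1.lt_of_ne (Ne.symm hmp), hm.2.lt_of_ne (by rintro rfl; linarith)⟩
    have hconv := (hmin.isLocalMin (Icc_mem_nhds hm'.1 hm'.2)).deriv_deriv_nonneg
      (hg m).continuousAt
    rw [(hg' m hm').deriv] at hconv
    have hEm : 0 < E m := exp_pos _
    have := hineq m hm'
    simp only [g] at hgm
    nlinarith [mul_pos hε hEm, mul_nonneg hμ hε.le, mul_nonneg (mul_nonneg hμ hε.le) hEm.le]
  have := (hmp ▸ hmin).nonneg_of_hasDerivAt_left hpq (hg p)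
  simp only [E, sub_self, mul_zero, exp_zero, mul_one] at this
  nlinarith

theorem nonpos_of_deriv_deriv_le_of_right (hμ : 0 ≤ μ) (hpq : p < q) (hw : Differentiable ℝ w)
    (hw' : DifferentiableOn ℝ (deriv w) (Ioo p q))
    (hineq : ∀ x ∈ Ioo p q, deriv (deriv w) x ≤ μ * w x) (hq : w q ≤ 0)
    (hq' : 0 ≤ deriv w q) : w p ≤ 0 := by
  have hmaps : MapsTo (fun x => p + q - x) (Ioo p q) (Ioo p q) := fun x hx =>
    ⟨by linarith [hx.2], by linarith [hx.1]⟩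
  have hW : deriv (fun x => w (p + q - x)) = fun x => -deriv w (p + q - x) :=
    funext fun x => deriv_comp_const_sub w (p + q) x
  have hW' : ∀ x, deriv (deriv fun x => w (p + q - x)) x = deriv (deriv w) (p + q - x) := by
    intro x
    rw [hW, deriv.fun_neg, deriv_comp_const_sub (deriv w), neg_neg]
  have := nonpos_of_deriv_deriv_le_of_left (w := fun x => w (p + q - x)) hμ hpq
    (hw.comp (differentiable_id.const_sub _)) ?_ ?_ (by simpa using hq) ?_
  · simpa using this
  · rw [hW]
    exact (hw'.comp (differentiableOn_id.const_sub _) hmaps).neg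
  · intro x hx
    rw [hW']
    exact hineq _ (hmaps hx)
  · simpa [hW] using hq'

theorem pos_of_deriv_deriv_le (hμ : 0 < μ) (hw : Differentiable ℝ w)
    (hw' : DifferentiableOn ℝ (deriv w) (Ioo p q))
    (hineq : ∀ x ∈ Ioo p q, deriv (deriv w) x ≤ μ * w x) (hp : 0 ≤ w p) (hq : 0 ≤ w q)
    (hne : ∃ y ∈ Ioo p q, w y ≠ 0) : ∀ x ∈ Ioo p q, 0 < w x := by
  have hnonneg := nonneg_of_deriv_deriv_le hμ hw.continuous.continuousOn hineq hp hq
  intro x hx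
  refine (hnonneg x (Ioo_subset_Icc_self hx)).lt_of_ne fun hx0 => ?_
  obtain ⟨y, hy, hy0⟩ := hne
  have hmin : IsMinOn w (Icc p q) x := fun z hz => hx0 ▸ hnonneg z hz
  have hx' : deriv w x = 0 := (hmin.isLocalMin (Icc_mem_nhds hx.1 hx.2)).deriv_eq_zero
  have hwy : w y ≤ 0 := by
    rcases lt_trichotomy x y with hxy | rfl | hyx
    · have hsub : Ioo x y ⊆ Ioo p q := Ioo_subset_Ioo hx.1.le hy.2.le
      exact nonpos_of_deriv_deriv_le_of_left hμ.le hxy hw (hw'.mono hsub)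
        (fun z hz => hineq z (hsub hz)) hx0.ge hx'.le
    · exact hx0.ge
    · have hsub : Ioo y x ⊆ Ioo p q := Ioo_subset_Ioo hy.1.le hx.2.le
      exact nonpos_of_deriv_deriv_le_of_right hμ.le hyx hw (hw'.mono hsub)
        (fun z hz => hineq z (hsub hz)) hx0.ge hx'.ge
  exact hy0 (hwy.antisymm (hnonneg y (Ioo_subset_Icc_self hy)))

end MinimumPrinciple

namespace NonConst

variable {L : ℝ} {u : ℝ → ℝ}

theorem pos (h : NonConst L u) : 0 < L := by
  by_contra! hL
  exact h ⟨u 0, fun x hx => by rw [show x = 0 by linarith [hx.1, hx.2]]⟩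

theorem neg (h : NonConst L u) : NonConst L (-u) :=
  fun ⟨c, hc⟩ => h ⟨-c, fun x hx => by simp [← hc x hx]⟩

theorem exists_deriv_ne_zero {μ ν : ℝ} {v : ℝ → ℝ} (h : NonConst L u) (hν : ν ≠ 0)
    (hu : Continuous u) (hv : Differentiable ℝ v)
    (heqv : ∀ x ∈ Ioo (0 : ℝ) L, deriv (deriv v) x - μ * v x + ν * u x = 0) :
    ∃ x ∈ Ioo (0 : ℝ) L, deriv v x ≠ 0 := by
  by_contra! hv'
  have hmid : L / 2 ∈ Ioo 0 L := ⟨by linarith [h.pos], by linarith [h.pos]⟩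
  have hv_const : ∀ x ∈ Ioo 0 L, v x = v (L / 2) := fun x hx =>
    isOpen_Ioo.is_const_of_deriv_eq_zero isPreconnected_Ioo hv.differentiableOn hv' hx hmid
  have hv'' : ∀ x ∈ Ioo 0 L, deriv (deriv v) x = 0 := fun x hx => by
    have : deriv v =ᶠ[𝓝 x] fun _ => 0 :=
      eventually_of_mem (isOpen_Ioo.mem_nhds hx) hv'
    simp [this.deriv_eq]
  have hu_const : EqOn u (fun _ => μ * v (L / 2) / ν) (Ioo 0 L) := fun x hx => by
    have := heqv x hx
    rw [hv'' x hx, hv_const x hx] at this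
    field_simp
    linarith
  exact h ⟨_, hu_const.of_subset_closure hu.continuousOn continuousOn_const
    Ioo_subset_Icc_self (closure_Ioo h.pos.ne).ge⟩

end NonConst

theorem deriv_pos_of_deriv_nonneg {μ ν L : ℝ} {u v : ℝ → ℝ} (hμ : 0 < μ) (hν : 0 < ν)
    (hu : Differentiable ℝ u) (hv : ContDiff ℝ 2 v)
    (heqv : ∀ x ∈ Ioo (0 : ℝ) L, deriv (deriv v) x - μ * v x + ν * u x = 0)
    (hv0 : deriv v 0 = 0) (hvL : deriv v L = 0) (hnc : NonConst L u)
    (hmono : ∀ x ∈ Ioo (0 : ℝ) L, 0 ≤ deriv u x) :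
    ∀ x ∈ Ioo (0 : ℝ) L, 0 < deriv v x := by
  have hv₁ : Differentiable ℝ v := hv.differentiable (by norm_num)
  have hv₂ : Differentiable ℝ (deriv v) := by
    simpa using hv.differentiable_iteratedDeriv 1 (by norm_num)
  have hv₃ : ∀ x ∈ Ioo (0 : ℝ) L,
      HasDerivAt (deriv (deriv v)) (μ * deriv v x - ν * deriv u x) x := fun x hx => by
    refine (((hv₁ x).hasDerivAt.const_mul μ).fun_sub
      ((hu x).hasDerivAt.const_mul ν)).congr_of_eventuallyEq ?_
    filter_upwards [isOpen_Ioo.mem_nhds hx] with y hy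
    linarith [heqv y hy]
  refine pos_of_deriv_deriv_le hμ hv₂
    (fun x hx => (hv₃ x hx).differentiableAt.differentiableWithinAt) (fun x hx => ?_)
    hv0.ge hvL.ge (hnc.exists_deriv_ne_zero hν.ne' hu.continuous hv₁ heqv)
  rw [(hv₃ x hx).deriv]
  nlinarith [hmono x hx]

theorem stmt_10_general (χ a b μ ν L : ℝ)
    (hμ : 0 < μ) (hν : 0 < ν)
    (u v : ℝ → ℝ) (hsol : IsStatSol χ a b μ ν L u v) (hnc : NonConst L u) :
    ((∀ x ∈ Ioo (0 : ℝ) L, 0 ≤ deriv u x) → ∀ x ∈ Ioo (0 : ℝ) L, 0 < deriv v x) ∧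
    ((∀ x ∈ Ioo (0 : ℝ) L, deriv u x ≤ 0) → ∀ x ∈ Ioo (0 : ℝ) L, deriv v x < 0) := by
  obtain ⟨hu, hv, -, -, -, heqv, -, -, hv0, hvL⟩ := hsol
  have hu₁ : Differentiable ℝ u := hu.differentiable (by norm_num)
  refine ⟨deriv_pos_of_deriv_nonneg hμ hν hu₁ hv heqv hv0 hvL hnc, fun hmono x hx => ?_⟩
  have hneg := deriv_pos_of_deriv_nonneg hμ hν hu₁.neg hv.neg
    (fun y hy => by simp only [deriv.fun_neg', Pi.neg_apply]; linarith [heqv y hy])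
    (by simp [hv0]) (by simp [hvL]) hnc.neg (fun y hy => by simpa using hmono y hy)
  simpa using hneg x hx

theorem stmt_10 (χ a b μ ν L : ℝ) (hχ : 0 < χ) (ha : 0 < a) (hb : 0 < b)
    (hμ : 0 < μ) (hν : 0 < ν) (hL : 0 < L)
    (u v : ℝ → ℝ) (hsol : IsStatSol χ a b μ ν L u v) (hnc : NonConst L u) :
    ((∀ x ∈ Ioo (0 : ℝ) L, 0 ≤ deriv u x) → ∀ x ∈ Ioo (0 : ℝ) L, 0 < deriv v x) ∧
    ((∀ x ∈ Ioo (0 : ℝ) L, deriv u x ≤ 0) → ∀ x ∈ Ioo (0 : ℝ) L, deriv v x < 0) :=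
  stmt_10_general χ a b μ ν L hμ hν u v hsol hnc
end
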